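/- Let P_K^{(1,0)} = ½(Id − iK) and P_K^{(0,1)} = ½(Id + iK) for a complex structure K on ℝ^{2n} (extended to ℂ^{2n}). Let J₀, J_t be compatible complex structures as above, A_t^0 = (½(Id+(−J₀J_t)))^{-1}, A_0^t = (½(Id+(−J_tJ₀)))^{-1}, Π_t^0 = A_t^0 P₀^{(1,0)}, Π_0^t = A_0^t P_t^{(1,0)}. Then the following identities hold: Π_t^0 P_t^{(1,0)} = P_t^{(1,0)}, Π_0^t P₀^{(1,0)} = P₀^{(1,0)}, P_t^{(1,0)} Π_t^0 = Π_t^0, and P₀^{(1,0)} Π_0^t = Π_0^t. -/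

import Mathlib

open Matrix MeasureTheory

noncomputable section

/-- Standard complex structure on ℝ^{2n}: J₀ e_{2k} = e_{2k+1}, J₀ e_{2k+1} = -e_{2k}. -/
def J0 (n : ℕ) : Matrix (Fin (2*n)) (Fin (2*n)) ℝ :=
  Matrix.of fun i j =>
    if (i : ℕ) = (j : ℕ) + 1 ∧ (j : ℕ) % 2 = 0 then 1
    else if (j : ℕ) = (i : ℕ) + 1 ∧ (i : ℕ) % 2 = 0 then -1 else 0

/-- Standard symplectic form Ω(u,v) = ⟨J₀ u, v⟩. -/
def Omega (n : ℕ) (u v : Fin (2*n) → ℝ) : ℝ := (J0 n *ᵥ u) ⬝ᵥ v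

/-- A complex structure J compatible with Ω: J² = -Id, Ω is J-invariant,
and ⟨·,·⟩_J := Ω(·, J·) is positive definite. -/
def Compatible (n : ℕ) (J : Matrix (Fin (2*n)) (Fin (2*n)) ℝ) : Prop :=
  J * J = -1 ∧ (∀ u v, Omega n (J *ᵥ u) (J *ᵥ v) = Omega n u v) ∧
    ∀ v : Fin (2*n) → ℝ, v ≠ 0 → 0 < Omega n v (J *ᵥ v)

/-- Complexification of a real matrix. -/
def mc {m : ℕ} (M : Matrix (Fin m) (Fin m) ℝ) : Matrix (Fin m) (Fin m) ℂ :=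
  M.map (fun x => (x : ℂ))

/-- Complexification of a real vector. -/
def vc {m : ℕ} (v : Fin m → ℝ) : Fin m → ℂ := fun i => (v i : ℂ)

/-- Projection P^{(1,0)} = ½(Id - iK) onto the +i eigenspace of K. -/
def P10 {n : ℕ} (K : Matrix (Fin (2*n)) (Fin (2*n)) ℝ) : Matrix (Fin (2*n)) (Fin (2*n)) ℂ :=
  (1/2 : ℂ) • (1 - Complex.I • mc K)

/-- Projection P^{(0,1)} = ½(Id + iK) onto the -i eigenspace of K. -/
def P01 {n : ℕ} (K : Matrix (Fin (2*n)) (Fin (2*n)) ℝ) : Matrix (Fin (2*n)) (Fin (2*n)) ℂ :=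
  (1/2 : ℂ) • (1 + Complex.I • mc K)

/-- `Amat n K J = (½(Id + (-K)·J))⁻¹`; so `Amat n (J0 n) J` is A_t^0 and
`Amat n J (J0 n)` is A_0^t. -/
def Amat (n : ℕ) (K J : Matrix (Fin (2*n)) (Fin (2*n)) ℝ) : Matrix (Fin (2*n)) (Fin (2*n)) ℝ :=
  ((1/2 : ℝ) • (1 + (-K) * J))⁻¹

/-- Π_t^0 = A_t^0 · P₀^{(1,0)}, the projection onto V_t^{(1,0)} with kernel V₀^{(0,1)}. -/
def PiT0 (n : ℕ) (J : Matrix (Fin (2*n)) (Fin (2*n)) ℝ) : Matrix (Fin (2*n)) (Fin (2*n)) ℂ :=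
  mc (Amat n (J0 n) J) * P10 (J0 n)

/-- Π_0^t = A_0^t · P_t^{(1,0)}, the projection onto V₀^{(1,0)} with kernel V_t^{(0,1)}. -/
def Pi0T (n : ℕ) (J : Matrix (Fin (2*n)) (Fin (2*n)) ℝ) : Matrix (Fin (2*n)) (Fin (2*n)) ℂ :=
  mc (Amat n J (J0 n)) * P10 J

/-- Model Bergman kernel 𝒫_J(Z,Z') = exp(-(π/2)⟨(-J₀J)(Z-Z'),Z-Z'⟩ - πiΩ(Z,Z')). -/
def Pker (n : ℕ) (J : Matrix (Fin (2*n)) (Fin (2*n)) ℝ) (Z Z' : Fin (2*n) → ℝ) : ℂ :=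
  Complex.exp (-(Real.pi : ℂ)/2 * Complex.ofReal ((((-(J0 n)) * J) *ᵥ (Z - Z')) ⬝ᵥ (Z - Z'))
    - (Real.pi : ℂ) * Complex.I * Complex.ofReal (Omega n Z Z'))

/-- Closed formula for the composed kernel (𝒫_t𝒫_0)(Z,Z'). -/
def PtP0form (n : ℕ) (J : Matrix (Fin (2*n)) (Fin (2*n)) ℝ) (Z Z' : Fin (2*n) → ℝ) : ℂ :=
  Complex.ofReal (Real.sqrt (Amat n (J0 n) J).det) *
    Complex.exp (-(Real.pi : ℂ) *
      ((Pi0T n J *ᵥ (vc Z - vc Z')) ⬝ᵥ (vc Z - vc Z')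
        + Complex.I * Complex.ofReal (Omega n Z Z')))

/-! If `a² = b² = -1` in a `ℂ`-algebra and `P_x = ½(1 - i x)`, then `b P_b = i P_b`, so
`M = ½(1 - ab)` satisfies `M P_b = P_a P_b`; expanding, `P_a M = M P_b = ¼(1 - ab - ia - ib)`.
Hence for `A = M⁻¹` we get `A P_a P_b = P_b` and `A P_a = P_b A`, and the idempotence of `P_a`
turns the latter into `P_b (A P_a) = A P_a`. The theorem is this with `(a, b) = (J₀, J_t)` and
`(J_t, J₀)`. Invertibility of `M` comes from compatibility: `J₀ J_t v = v` forces
`J₀ v = -J_t v`, so `Ω(v, J_t v) = -|J_t v|² ≤ 0` and `v = 0`. -/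

section ComplexAlgebra

variable {R : Type*} [Ring R] [Algebra ℂ R] {a b : R}

def proj10 (a : R) : R := (1/2 : ℂ) • (1 - Complex.I • a)

lemma proj10_mul (a x : R) : proj10 a * x = (1/2 : ℂ) • (x - Complex.I • (a * x)) := by
  rw [proj10, smul_mul_assoc, sub_mul, one_mul, smul_mul_assoc]

lemma mul_proj10 (ha : a * a = -1) : a * proj10 a = Complex.I • proj10 a := by
  simp only [proj10, mul_smul_comm, mul_sub, mul_one, ha, smul_sub, smul_neg, smul_smul]
  match_scalars <;> ring_nf
  simp only [Complex.I_sq]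
  ring

lemma isIdempotentElem_proj10 (ha : a * a = -1) : IsIdempotentElem (proj10 a) := by
  rw [IsIdempotentElem, proj10_mul, mul_proj10 ha, smul_smul, Complex.I_mul_I, neg_one_smul,
    sub_neg_eq_add, ← two_smul ℂ, smul_smul]
  norm_num

lemma half_one_sub_mul_mul_proj10 (hb : b * b = -1) :
    (1/2 : ℂ) • (1 - a * b) * proj10 b = proj10 a * proj10 b := by
  rw [proj10_mul, smul_mul_assoc, sub_mul, one_mul, mul_assoc, mul_proj10 hb, mul_smul_comm]

lemma proj10_mul_half_one_sub_mul (ha : a * a = -1) (hb : b * b = -1) :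
    proj10 a * (1/2 : ℂ) • (1 - a * b) = (1/2 : ℂ) • (1 - a * b) * proj10 b := by
  have hab : a * (a * b) = -b := by rw [← mul_assoc, ha, neg_one_mul]
  simp only [proj10, mul_sub, sub_mul, one_mul, mul_one, smul_mul_assoc,
    mul_smul_comm, smul_sub, mul_assoc, hab, hb, mul_neg, smul_neg]
  match_scalars <;> ring

lemma mul_proj10_mul_proj10_of_mul_eq_one {A : R} (hb : b * b = -1)
    (hAM : A * (1/2 : ℂ) • (1 - a * b) = 1) : A * proj10 a * proj10 b = proj10 b := by
  rw [mul_assoc, ← half_one_sub_mul_mul_proj10 hb, ← mul_assoc, hAM, one_mul]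

lemma proj10_mul_mul_proj10_of_mul_eq_one {A : R} (ha : a * a = -1) (hb : b * b = -1)
    (hAM : A * (1/2 : ℂ) • (1 - a * b) = 1) (hMA : (1/2 : ℂ) • (1 - a * b) * A = 1) :
    proj10 b * (A * proj10 a) = A * proj10 a := by
  have hconj : A * proj10 a = proj10 b * A := by
    calc A * proj10 a = A * (proj10 a * (1/2 : ℂ) • (1 - a * b)) * A := by
          rw [mul_assoc, mul_assoc, hMA, mul_one]
      _ = proj10 b * A := by
          rw [proj10_mul_half_one_sub_mul ha hb, ← mul_assoc, hAM, one_mul]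
  rw [← mul_assoc, ← hconj, mul_assoc, (isIdempotentElem_proj10 ha).eq]

end ComplexAlgebra

lemma J0_mul_self (n : ℕ) : J0 n * J0 n = -1 := by
  ext i j
  -- Row `i` of `J0` has its only nonzero entry in column `k`.
  obtain ⟨k, hk⟩ : ∃ k : Fin (2 * n), (k : ℕ) = if (i : ℕ) % 2 = 0 then (i : ℕ) + 1 else i - 1 :=
    ⟨⟨if (i : ℕ) % 2 = 0 then (i : ℕ) + 1 else i - 1, by have := i.isLt; split_ifs <;> omega⟩,
      rfl⟩
  rw [mul_apply, Matrix.neg_apply, one_apply, Finset.sum_eq_single k]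
  · simp only [J0, of_apply, Fin.ext_iff]
    split_ifs at hk <;> split_ifs <;> first | omega | norm_num
  · intro l _ hl
    rw [Ne, Fin.ext_iff] at hl
    simp only [J0, of_apply]
    split_ifs at hk <;> split_ifs <;> first | omega | simp
  · simp

lemma isUnit_one_sub_mul_of_pos {ι : Type*} [Fintype ι] [DecidableEq ι] {K J : Matrix ι ι ℝ}
    (hK : K * K = -1) (hpos : ∀ v, v ≠ 0 → 0 < (K *ᵥ v) ⬝ᵥ (J *ᵥ v)) :
    IsUnit (1 - K * J) := by
  rw [isUnit_iff_isUnit_det, isUnit_iff_ne_zero, Ne, ← exists_mulVec_eq_zero_iff]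
  rintro ⟨v, hv, hker⟩
  have hfix : K *ᵥ (J *ᵥ v) = v := by
    rwa [sub_mulVec, one_mulVec, sub_eq_zero, ← mulVec_mulVec, eq_comm] at hker
  have hKv : K *ᵥ v = -(J *ᵥ v) := by
    conv_lhs => rw [← hfix, mulVec_mulVec, hK, neg_mulVec, one_mulVec]
  have hsq : 0 ≤ (J *ᵥ v) ⬝ᵥ (J *ᵥ v) := Finset.sum_nonneg fun i _ => mul_self_nonneg _
  have hv_pos := hpos v hv
  rw [hKv, neg_dotProduct] at hv_pos
  linarith

lemma mc_mul {m : ℕ} (M N : Matrix (Fin m) (Fin m) ℝ) : mc (M * N) = mc M * mc N :=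
  map_mul Complex.ofRealHom.mapMatrix M N

lemma mc_one {m : ℕ} : mc (1 : Matrix (Fin m) (Fin m) ℝ) = 1 :=
  map_one Complex.ofRealHom.mapMatrix

lemma mc_neg {m : ℕ} (M : Matrix (Fin m) (Fin m) ℝ) : mc (-M) = -mc M :=
  map_neg Complex.ofRealHom.mapMatrix M

lemma mc_sub {m : ℕ} (M N : Matrix (Fin m) (Fin m) ℝ) : mc (M - N) = mc M - mc N :=
  map_sub Complex.ofRealHom.mapMatrix M N

lemma mc_smul {m : ℕ} (r : ℝ) (M : Matrix (Fin m) (Fin m) ℝ) : mc (r • M) = (r : ℂ) • mc M := by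
  ext i j
  simp [mc]

lemma mc_mul_self_of_mul_self {m : ℕ} {K : Matrix (Fin m) (Fin m) ℝ} (hK : K * K = -1) :
    mc K * mc K = -1 := by
  rw [← mc_mul, hK, mc_neg, mc_one]

lemma mc_half_one_add_neg_mul {m : ℕ} (K J : Matrix (Fin m) (Fin m) ℝ) :
    mc ((1/2 : ℝ) • (1 + (-K) * J)) = (1/2 : ℂ) • (1 - mc K * mc J) := by
  rw [neg_mul, ← sub_eq_add_neg, mc_smul, mc_sub, mc_one, mc_mul]
  norm_num

lemma P10_eq_proj10 {n : ℕ} (K : Matrix (Fin (2*n)) (Fin (2*n)) ℝ) : P10 K = proj10 (mc K) :=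
  rfl

lemma mc_Amat_mul_and_mul_mc_Amat {n : ℕ} {K J : Matrix (Fin (2*n)) (Fin (2*n)) ℝ}
    (h : IsUnit (1 - K * J)) :
    mc (Amat n K J) * (1/2 : ℂ) • (1 - mc K * mc J) = 1 ∧
      (1/2 : ℂ) • (1 - mc K * mc J) * mc (Amat n K J) = 1 := by
  have hdet : IsUnit ((1/2 : ℝ) • (1 + (-K) * J)).det := by
    rw [← isUnit_iff_isUnit_det, neg_mul, ← sub_eq_add_neg]
    exact h.smul (Units.mk0 (1/2 : ℝ) (by norm_num))
  rw [← mc_half_one_add_neg_mul, Amat, ← mc_mul, ← mc_mul, nonsing_inv_mul _ hdet,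
    mul_nonsing_inv _ hdet, mc_one, and_self]

lemma mc_Amat_mul_P10_identities {n : ℕ} {K J : Matrix (Fin (2*n)) (Fin (2*n)) ℝ}
    (hK : K * K = -1) (hJ : J * J = -1) (h : IsUnit (1 - K * J)) :
    mc (Amat n K J) * P10 K * P10 J = P10 J ∧
      P10 J * (mc (Amat n K J) * P10 K) = mc (Amat n K J) * P10 K := by
  obtain ⟨hAM, hMA⟩ := mc_Amat_mul_and_mul_mc_Amat h
  have hKc := mc_mul_self_of_mul_self hK
  have hJc := mc_mul_self_of_mul_self hJ
  simp only [P10_eq_proj10]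
  exact ⟨mul_proj10_mul_proj10_of_mul_eq_one hJc hAM,
    proj10_mul_mul_proj10_of_mul_eq_one hKc hJc hAM hMA⟩

/-- the identities Π_t^0 P_t^{(1,0)} = P_t^{(1,0)},
Π_0^t P₀^{(1,0)} = P₀^{(1,0)}, P_t^{(1,0)} Π_t^0 = Π_t^0, P₀^{(1,0)} Π_0^t = Π_0^t. -/
theorem stmt2 (n : ℕ) (Jt : Matrix (Fin (2*n)) (Fin (2*n)) ℝ) (hJ : Compatible n Jt) :
    PiT0 n Jt * P10 Jt = P10 Jt ∧
    Pi0T n Jt * P10 (J0 n) = P10 (J0 n) ∧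
    P10 Jt * PiT0 n Jt = PiT0 n Jt ∧
    P10 (J0 n) * Pi0T n Jt = Pi0T n Jt := by
  obtain ⟨hJt, -, hpos⟩ := hJ
  have h0t : IsUnit (1 - J0 n * Jt) := isUnit_one_sub_mul_of_pos (J0_mul_self n) hpos
  have ht0 : IsUnit (1 - Jt * J0 n) :=
    isUnit_one_sub_mul_of_pos hJt fun v hv => by rw [dotProduct_comm]; exact hpos v hv
  obtain ⟨h1, h3⟩ := mc_Amat_mul_P10_identities (J0_mul_self n) hJt h0t
  obtain ⟨h2, h4⟩ := mc_Amat_mul_P10_identities hJt (J0_mul_self n) ht0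
  exact ⟨h1, h2, h3, h4⟩

end
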